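/- arXiv:2405.18846 — 3 statements merged into one kernel-verified Lean document; each statement's English description precedes it below -/
import Mathlib

section
/- Let p > 1 and let μ_p = (√((p+1)/2) · L_p)^{2/(p-1)} where L_p = ∫₁^∞ dt/√(t^{p+1}-1). Then log μ_p → 0, hence μ_p → 1, as p → ∞. -/
/-!
Write `μ_p = g(p) ^ (2 / (p - 1))` with `g(p) = √((p + 1) / 2) · L_p`, so that
`log μ_p = 2 log g(p) / (p - 1)`. Comparing the integrand with `t ^ (-(p + 1) / 2)` gives
`L_p ≥ 2 / (p - 1)`, and `L_p` decreases in `p`, so `L_p ≤ L_2` for `p ≥ 2`. Hence `g` is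
squeezed between `1 / p` and `p²`, so `log g(p) = O(log p) = o(p)`.
-/

open Real Set MeasureTheory Filter Topology

theorem Real.tendsto_log_div_add_atTop_of_inv_pow_le_of_le_pow {g : ℝ → ℝ} {m n : ℕ}
    (hlower : ∀ᶠ x in atTop, (x ^ m)⁻¹ ≤ g x) (hupper : ∀ᶠ x in atTop, g x ≤ x ^ n) (b : ℝ) :
    Tendsto (fun x => log (g x) / (x + b)) atTop (𝓝 0) := by
  have hlog : Tendsto (fun x => log x / (x + b)) atTop (𝓝 0) := by
    simpa using tendsto_pow_log_div_mul_add_atTop 1 b 1 one_ne_zero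
  have hlo := hlog.const_mul (-(m : ℝ))
  have hhi := hlog.const_mul (n : ℝ)
  rw [mul_zero] at hlo hhi
  refine tendsto_of_tendsto_of_tendsto_of_le_of_le' hlo hhi ?_ ?_ <;>
    filter_upwards [hlower, hupper, eventually_gt_atTop 0, eventually_gt_atTop (-b)]
      with x hxl hxu hx hxb
  · have : -(m * log x) ≤ log (g x) := by
      rw [← Real.log_pow, ← Real.log_inv]
      exact log_le_log (by positivity) hxl
    rw [mul_div_assoc']
    exact div_le_div_of_nonneg_right (by linarith) (by linarith)
  · have : log (g x) ≤ n * log x := by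
      rw [← Real.log_pow]
      exact log_le_log ((inv_pos.2 (pow_pos hx m)).trans_le hxl) hxu
    rw [mul_div_assoc']
    exact div_le_div_of_nonneg_right this (by linarith)

lemma Real.one_div_sqrt_rpow {t : ℝ} (ht : 0 ≤ t) (q : ℝ) : 1 / √(t ^ q) = t ^ (-(q / 2)) := by
  rw [sqrt_eq_rpow, ← rpow_mul ht, rpow_neg ht, one_div, mul_one_div]

lemma Real.one_div_sqrt_le_one_div_sqrt {a b : ℝ} (ha : 0 < a) (hab : a ≤ b) :
    1 / √b ≤ 1 / √a :=
  one_div_le_one_div_of_le (sqrt_pos.2 ha) (sqrt_le_sqrt hab)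

namespace BoundaryBlowUp

noncomputable def L (p : ℝ) : ℝ := ∫ t in Ioi 1, 1 / √(t ^ (p + 1) - 1)

noncomputable def μ (p : ℝ) : ℝ := (√((p + 1) / 2) * L p) ^ (2 / (p - 1))

lemma L_nonneg (p : ℝ) : 0 ≤ L p :=
  setIntegral_nonneg measurableSet_Ioi fun _ _ => by positivity

variable {p : ℝ}

lemma integrableOn_of_le {s : Set ℝ} {g : ℝ → ℝ} (hs : MeasurableSet s) (hg : IntegrableOn g s)
    (hle : ∀ t ∈ s, 1 / √(t ^ (p + 1) - 1) ≤ g t) :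
    IntegrableOn (fun t => 1 / √(t ^ (p + 1) - 1)) s := by
  refine hg.integrable.mono' (Measurable.aestronglyMeasurable (by fun_prop))
    ((ae_restrict_iff' hs).2 (.of_forall fun t ht => ?_))
  rw [norm_of_nonneg (by positivity)]
  exact hle t ht

lemma integrableOn_Ioc_one_two (hp : 0 ≤ p) :
    IntegrableOn (fun t => 1 / √(t ^ (p + 1) - 1)) (Ioc 1 2) := by
  have hsing : IntegrableOn (fun t : ℝ => (t - 1) ^ (-(1 / 2 : ℝ))) (Ioc 1 2) := by
    have := (intervalIntegral.intervalIntegrable_rpow' (a := 0) (b := 1)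
      (r := -(1 / 2)) (by norm_num)).comp_sub_right 1
    norm_num at this
    exact (intervalIntegrable_iff_integrableOn_Ioc_of_le one_le_two).1 this
  refine integrableOn_of_le measurableSet_Ioc hsing fun t ⟨ht, _⟩ => ?_
  have hle : t ≤ t ^ (p + 1) := self_le_rpow_of_one_le ht.le (by linarith)
  rw [← one_div_sqrt_rpow (by linarith), rpow_one]
  exact one_div_sqrt_le_one_div_sqrt (by linarith) (by linarith)

lemma integrableOn_Ioi_two (hp : 1 < p) :
    IntegrableOn (fun t => 1 / √(t ^ (p + 1) - 1)) (Ioi 2) := by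
  refine integrableOn_of_le measurableSet_Ioi
    ((integrableOn_Ioi_rpow_of_lt (by linarith : -((p + 1) / 2) < -1) two_pos).const_mul √2)
    fun t (ht : 2 < t) => ?_
  have hle : t ≤ t ^ (p + 1) := self_le_rpow_of_one_le (by linarith) (by linarith)
  calc 1 / √(t ^ (p + 1) - 1) ≤ 1 / √(t ^ (p + 1) / 2) :=
        one_div_sqrt_le_one_div_sqrt (by positivity) (by linarith)
    _ = √2 * t ^ (-((p + 1) / 2)) := by
        rw [sqrt_div (by positivity), one_div_div, ← one_div_sqrt_rpow (by linarith), mul_one_div]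

lemma integrableOn_Ioi_one (hp : 1 < p) :
    IntegrableOn (fun t => 1 / √(t ^ (p + 1) - 1)) (Ioi 1) := by
  rw [← Ioc_union_Ioi_eq_Ioi one_le_two]
  exact (integrableOn_Ioc_one_two (by linarith)).union (integrableOn_Ioi_two hp)

lemma two_div_sub_one_le_L (hp : 1 < p) : 2 / (p - 1) ≤ L p := by
  have hexp : -((p + 1) / 2) < -1 := by linarith
  calc 2 / (p - 1) = ∫ t in Ioi 1, t ^ (-((p + 1) / 2)) := by
        rw [integral_Ioi_rpow_of_lt hexp one_pos, one_rpow,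
          show -((p + 1) / 2) + 1 = -((p - 1) / 2) by ring, neg_div_neg_eq, one_div_div]
    _ ≤ L p := by
        refine setIntegral_mono_on (integrableOn_Ioi_rpow_of_lt hexp one_pos)
          (integrableOn_Ioi_one hp) measurableSet_Ioi fun t (ht : 1 < t) => ?_
        rw [← one_div_sqrt_rpow (by linarith)]
        exact one_div_sqrt_le_one_div_sqrt (sub_pos.2 (one_lt_rpow ht (by linarith))) (by linarith)

lemma L_le_L_of_le {q : ℝ} (hp : 1 < p) (hpq : p ≤ q) : L q ≤ L p := by
  refine setIntegral_mono_on (integrableOn_Ioi_one (hp.trans_le hpq)) (integrableOn_Ioi_one hp)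
    measurableSet_Ioi fun t (ht : 1 < t) => ?_
  exact one_div_sqrt_le_one_div_sqrt (sub_pos.2 (one_lt_rpow ht (by linarith)))
    (sub_le_sub_right (rpow_le_rpow_of_exponent_le ht.le (by linarith)) 1)

lemma inv_le_sqrt_mul_L (hp : 2 ≤ p) : p⁻¹ ≤ √((p + 1) / 2) * L p :=
  calc p⁻¹ ≤ 2 / (p - 1) := by
        rw [inv_eq_one_div, div_le_div_iff₀ (by linarith) (by linarith)]
        linarith
    _ ≤ L p := two_div_sub_one_le_L (by linarith)
    _ ≤ √((p + 1) / 2) * L p :=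
        le_mul_of_one_le_left (L_nonneg p) (one_le_sqrt.2 (by linarith))

lemma sqrt_mul_L_le_sq (hp : 2 ≤ p) (hpL : L 2 ≤ p) : √((p + 1) / 2) * L p ≤ p ^ 2 := by
  have hsqrt : √((p + 1) / 2) ≤ p := (sqrt_le_left (by linarith)).2 (by nlinarith)
  calc √((p + 1) / 2) * L p ≤ p * L 2 :=
        mul_le_mul hsqrt (L_le_L_of_le one_lt_two hp) (L_nonneg p) (by linarith)
    _ ≤ p ^ 2 := by rw [sq]; gcongr

lemma sqrt_mul_L_pos (hp : 2 ≤ p) : 0 < √((p + 1) / 2) * L p :=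
  (inv_pos.2 (by linarith)).trans_le (inv_le_sqrt_mul_L hp)

lemma tendsto_log_μ : Tendsto (fun p => log (μ p)) atTop (𝓝 0) := by
  have hlower : ∀ᶠ p in atTop, (p ^ 1)⁻¹ ≤ √((p + 1) / 2) * L p := by
    filter_upwards [eventually_ge_atTop 2] with p hp
    simpa using inv_le_sqrt_mul_L hp
  have hupper : ∀ᶠ p in atTop, √((p + 1) / 2) * L p ≤ p ^ 2 := by
    filter_upwards [eventually_ge_atTop 2, eventually_ge_atTop (L 2)] with p hp hpL
    exact sqrt_mul_L_le_sq hp hpL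
  have hlim := (tendsto_log_div_add_atTop_of_inv_pow_le_of_le_pow hlower hupper (-1)).const_mul 2
  rw [mul_zero] at hlim
  refine hlim.congr' ?_
  filter_upwards [eventually_ge_atTop 2] with p hp
  rw [μ, log_rpow (sqrt_mul_L_pos hp), ← sub_eq_add_neg]
  ring

lemma tendsto_μ : Tendsto μ atTop (𝓝 1) := by
  have hexp := (continuous_exp.tendsto 0).comp tendsto_log_μ
  rw [exp_zero] at hexp
  refine hexp.congr' ?_
  filter_upwards [eventually_ge_atTop 2] with p hp
  exact exp_log (rpow_pos_of_pos (sqrt_mul_L_pos hp) _)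

end BoundaryBlowUp

theorem mu_p_tendsto_one :
    Tendsto (fun p : ℝ =>
        Real.log ((Real.sqrt ((p + 1) / 2) *
          ∫ t in Set.Ioi (1 : ℝ), 1 / Real.sqrt (t ^ (p + 1) - 1)) ^ (2 / (p - 1))))
      atTop (𝓝 0) ∧
    Tendsto (fun p : ℝ =>
        (Real.sqrt ((p + 1) / 2) *
          ∫ t in Set.Ioi (1 : ℝ), 1 / Real.sqrt (t ^ (p + 1) - 1)) ^ (2 / (p - 1)))
      atTop (𝓝 1) := by
  exact ⟨BoundaryBlowUp.tendsto_log_μ, BoundaryBlowUp.tendsto_μ⟩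
end

section
/- Let p > 1, 0 < q < (p-1)/2, and let U be as in the time-map setting with minimum μ. Then ∫_{-1}^{1} U(x)^q dx = √(2/(p+1)) · μ^{(2q-p+1)/2} · B((p-2q-1)/(2(p+1)), 1/2). -/
open Real Set MeasureTheory Filter Topology

/-!
Since `U` is even, the integral over `(-1, 1)` is twice the integral over `(0, 1)`. There `U`
increases from `μ` to `∞` (because `U'' > 0` and `U'(0) = 0`), so `s = (μ / U x) ^ (p + 1)` maps
`(0, 1)` decreasingly onto `(0, 1)`. The first integral `U'² = 2/(p+1) (U^{p+1} - μ^{p+1})` gives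
`1 - s = (p+1)/2 · U'² / U^{p+1}`, and with it the Jacobian of this substitution turns the Beta
integrand `s^{α-1} (1-s)^{-1/2}`, `α = (p-2q-1)/(2(p+1))`, into `√(2(p+1)) μ^{(p-2q-1)/2} U^q`.
-/

theorem setIntegral_Ioo_neg_eq_two_mul_of_even {f : ℝ → ℝ} (hf : ∀ x, f (-x) = f x) (a : ℝ) :
    ∫ x in Ioo (-a) a, f x = 2 * ∫ x in Ioo 0 a, f x := by
  have hmem : ∀ x, |x| ∈ Ioo (-a) a ↔ x ∈ Ioo (-a) a := fun x => by
    rw [mem_Ioo, mem_Ioo, ← abs_lt (a := x)]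
    exact ⟨And.right, fun h => ⟨by linarith [abs_nonneg x], h⟩⟩
  have hf_abs : ∀ x, f |x| = f x := fun x => by
    rcases abs_choice x with h | h <;> simp only [h, hf]
  have hIoo : Ioi 0 ∩ Ioo (-a) a = Ioo 0 a := by
    ext x
    simp only [mem_inter_iff, mem_Ioi, mem_Ioo]
    exact ⟨fun ⟨h0, _, ha⟩ => ⟨h0, ha⟩, fun ⟨h0, ha⟩ => ⟨h0, by linarith, ha⟩⟩
  calc ∫ x in Ioo (-a) a, f x = ∫ x, (Ioo (-a) a).indicator f x :=
        (integral_indicator measurableSet_Ioo).symm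
    _ = ∫ x, (Ioo (-a) a).indicator f |x| := by
        simp only [indicator_apply, hmem, hf_abs]
    _ = 2 * ∫ x in Ioo 0 a, f x := by
        rw [integral_comp_abs, setIntegral_indicator measurableSet_Ioo, hIoo]

theorem lt_of_hasDerivAt_pos_Ico {f f' : ℝ → ℝ} {a b x : ℝ}
    (hf : ∀ y ∈ Ico a b, HasDerivAt f (f' y) y) (hf' : ∀ y ∈ Ioo a b, 0 < f' y)
    (hx : x ∈ Ioo a b) : f a < f x := by
  have hmono : StrictMonoOn f (Ico a b) := by
    refine strictMonoOn_of_deriv_pos (convex_Ico a b)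
      (fun y hy => (hf y hy).continuousAt.continuousWithinAt) fun y hy => ?_
    rw [interior_Ico] at hy
    rw [(hf y (Ioo_subset_Ico_self hy)).deriv]
    exact hf' y hy
  exact hmono (left_mem_Ico.2 (hx.1.trans hx.2)) (Ioo_subset_Ico_self hx) hx.1

theorem image_Ioo_eq_Ioo_of_tendsto {σ : ℝ → ℝ} {a b c d : ℝ} (hab : a < b)
    (hmaps : MapsTo σ (Ioo a b) (Ioo c d)) (hσ : ContinuousOn σ (Ioo a b))
    (ha : Tendsto σ (𝓝[Ioo a b] a) (𝓝 d)) (hb : Tendsto σ (𝓝[Ioo a b] b) (𝓝 c)) :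
    σ '' Ioo a b = Ioo c d :=
  have := left_nhdsWithin_Ioo_neBot hab
  have := right_nhdsWithin_Ioo_neBot hab
  hmaps.image_subset.antisymm <|
    isPreconnected_Ioo.intermediate_value_Ioo (l₁ := 𝓝[Ioo a b] b) (l₂ := 𝓝[Ioo a b] a)
      inf_le_right inf_le_right hσ hb ha

theorem hasDerivAt_div_rpow {U : ℝ → ℝ} {U' μ r x : ℝ} (hU : HasDerivAt U U' x) (hμ : μ ≠ 0)
    (hUx : U x ≠ 0) :
    HasDerivAt (fun y => (μ / U y) ^ r) (-(r * (μ / U x) ^ (r - 1) * (μ * U' / U x ^ 2))) x := by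
  convert ((hasDerivAt_const x μ).fun_div hU hUx).rpow_const (p := r)
    (Or.inl (div_ne_zero hμ hUx)) using 1
  ring

theorem jacobian_mul_beta_integrand {p q μ u w : ℝ} (hp : 0 < p + 1) (hμ : 0 < μ) (hu : μ < u)
    (hw : 0 < w) (hw2 : w ^ 2 = 2 / (p + 1) * (u ^ (p + 1) - μ ^ (p + 1))) :
    (p + 1) * (μ / u) ^ p * (μ * w / u ^ 2) *
      (((μ / u) ^ (p + 1)) ^ ((p - 2 * q - 1) / (2 * (p + 1)) - 1) *
        (1 - (μ / u) ^ (p + 1)) ^ ((1 : ℝ) / 2 - 1)) =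
      √(2 * (p + 1)) * μ ^ ((p - 2 * q - 1) / 2) * u ^ q := by
  have hu0 : 0 < u := hμ.trans hu
  have hs : 0 < μ / u := div_pos hμ hu0
  have hv : 0 < (p + 1) / 2 * w ^ 2 / u ^ (p + 1) := by positivity
  have hcompl : 1 - (μ / u) ^ (p + 1) = (p + 1) / 2 * w ^ 2 / u ^ (p + 1) := by
    rw [div_rpow hμ.le hu0.le, hw2]
    field_simp
  rw [hcompl, ← rpow_mul hs.le]
  -- both sides are products of powers of positive numbers: compare their logarithms
  refine log_injOn_pos (mem_Ioi.2 (by positivity)) (mem_Ioi.2 (by positivity)) ?_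
  simp (disch := positivity) only [log_mul, log_div, log_rpow, log_pow, log_sqrt]
  field_simp
  ring

theorem image_div_rpow_eq_Ioo {p μ : ℝ} {U : ℝ → ℝ} (hp : 0 < p + 1) (hμ : 0 < μ)
    (hU : ContinuousOn U (Ico 0 1)) (hU0 : U 0 = μ) (hgt : ∀ x ∈ Ioo (0 : ℝ) 1, μ < U x)
    (hblow : Tendsto U (𝓝[Ioo (0 : ℝ) 1] 1) atTop) :
    (fun x => (μ / U x) ^ (p + 1)) '' Ioo 0 1 = Ioo 0 1 := by
  set σ : ℝ → ℝ := fun x => (μ / U x) ^ (p + 1)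
  have hUpos : ∀ x ∈ Ico (0 : ℝ) 1, 0 < U x := fun x hx =>
    hx.1.eq_or_lt.elim (fun h => h ▸ hU0 ▸ hμ) fun h => hμ.trans (hgt x ⟨h, hx.2⟩)
  have hσ : ContinuousOn σ (Ico 0 1) :=
    (continuousOn_const.div hU fun x hx => (hUpos x hx).ne').rpow_const fun _ _ => Or.inr hp.le
  have hmaps : MapsTo σ (Ioo 0 1) (Ioo 0 1) := fun x hx =>
    have hs := div_pos hμ (hμ.trans (hgt x hx))
    ⟨rpow_pos_of_pos hs _, rpow_lt_one hs.le ((div_lt_one (hμ.trans (hgt x hx))).2 (hgt x hx)) hp⟩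
  have hσ0 : Tendsto σ (𝓝[Ioo 0 1] 0) (𝓝 1) := by
    simpa [σ, hU0, hμ.ne'] using
      ((hσ 0 (left_mem_Ico.2 one_pos)).mono Ioo_subset_Ico_self).tendsto
  have hσ1 : Tendsto σ (𝓝[Ioo 0 1] 1) (𝓝 0) := by
    simpa [σ, Function.comp_def, zero_rpow hp.ne'] using
      ((continuousAt_rpow_const 0 (p + 1) (Or.inr hp.le)).tendsto.comp
        (tendsto_const_nhds.div_atTop hblow))
  exact image_Ioo_eq_Ioo_of_tendsto one_pos hmaps (hσ.mono Ioo_subset_Ico_self) hσ0 hσ1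

theorem integral_beta_eq_mul_integral_rpow {p q μ : ℝ} {U U' : ℝ → ℝ} (hp : 0 < p + 1)
    (hμ : 0 < μ) (hU : ∀ x ∈ Ico (0 : ℝ) 1, HasDerivAt U (U' x) x) (hU0 : U 0 = μ)
    (hgt : ∀ x ∈ Ioo (0 : ℝ) 1, μ < U x) (hU'pos : ∀ x ∈ Ioo (0 : ℝ) 1, 0 < U' x)
    (hblow : Tendsto U (𝓝[Ioo (0 : ℝ) 1] 1) atTop)
    (henergy : ∀ x ∈ Ioo (0 : ℝ) 1, U' x ^ 2 = 2 / (p + 1) * (U x ^ (p + 1) - μ ^ (p + 1))) :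
    ∫ s in Ioo (0 : ℝ) 1, s ^ ((p - 2 * q - 1) / (2 * (p + 1)) - 1) * (1 - s) ^ ((1 : ℝ) / 2 - 1) =
      √(2 * (p + 1)) * μ ^ ((p - 2 * q - 1) / 2) * ∫ x in Ioo (0 : ℝ) 1, U x ^ q := by
  set σ : ℝ → ℝ := fun x => (μ / U x) ^ (p + 1)
  set J : ℝ → ℝ := fun x => (p + 1) * (μ / U x) ^ p * (μ * U' x / U x ^ 2)
  have hUpos : ∀ x ∈ Ioo (0 : ℝ) 1, 0 < U x := fun x hx => hμ.trans (hgt x hx)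
  have hσ : ∀ x ∈ Ioo (0 : ℝ) 1, HasDerivAt σ (-J x) x := fun x hx => by
    simpa only [add_sub_cancel_right] using
      hasDerivAt_div_rpow (r := p + 1) (hU x (Ioo_subset_Ico_self hx)) hμ.ne' (hUpos x hx).ne'
  have hJ : ∀ x ∈ Ioo (0 : ℝ) 1, 0 < J x := fun x hx => by
    have := hUpos x hx; have := hU'pos x hx; positivity
  have hcont : ContinuousOn σ (Ioo 0 1) := fun x hx => (hσ x hx).continuousAt.continuousWithinAt
  have hinj : InjOn σ (Ioo 0 1) := by
    refine (strictAntiOn_of_hasDerivWithinAt_neg (f' := fun x => -J x) (convex_Ioo 0 1) hcont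
      ?_ ?_).injOn <;> rw [interior_Ioo]
    · exact fun x hx => (hσ x hx).hasDerivWithinAt
    · exact fun x hx => neg_neg_of_pos (hJ x hx)
  have himage : σ '' Ioo 0 1 = Ioo 0 1 := image_div_rpow_eq_Ioo hp hμ
    (fun x hx => (hU x hx).continuousAt.continuousWithinAt) hU0 hgt hblow
  calc _ = ∫ x in Ioo (0 : ℝ) 1, |-J x| •
        ((σ x) ^ ((p - 2 * q - 1) / (2 * (p + 1)) - 1) * (1 - σ x) ^ ((1 : ℝ) / 2 - 1)) := by
        conv_lhs => rw [← himage]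
        exact integral_image_eq_integral_abs_deriv_smul measurableSet_Ioo
          (fun x hx => (hσ x hx).hasDerivWithinAt) hinj _
    _ = ∫ x in Ioo (0 : ℝ) 1, √(2 * (p + 1)) * μ ^ ((p - 2 * q - 1) / 2) * U x ^ q := by
        refine setIntegral_congr_fun measurableSet_Ioo fun x hx => ?_
        rw [abs_neg, abs_of_pos (hJ x hx), smul_eq_mul]
        exact jacobian_mul_beta_integrand hp hμ (hgt x hx) (hU'pos x hx) (henergy x hx)
    _ = _ := integral_const_mul _ _

theorem Lq_norm_formula_general (p q : ℝ) (hp : 1 < p)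
    (U U' U'' : ℝ → ℝ) (μ : ℝ) (hμ : 0 < μ)
    (hU1 : ∀ x ∈ Set.Ioo (-1 : ℝ) 1, HasDerivAt U (U' x) x)
    (hU2 : ∀ x ∈ Set.Ioo (-1 : ℝ) 1, HasDerivAt U' (U'' x) x)
    (heven : ∀ x, U (-x) = U x)
    (hpos : ∀ x ∈ Set.Ioo (-1 : ℝ) 1, 0 < U x)
    (heq : ∀ x ∈ Set.Ioo (-1 : ℝ) 1, U'' x = U x ^ p)
    (hblow2 : Tendsto U (𝓝[Set.Ioo (-1 : ℝ) 1] 1) atTop)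
    (hU0 : U 0 = μ)
    (hU' : ∀ x ∈ Set.Ico (0 : ℝ) 1,
      U' x = Real.sqrt ((2 / (p + 1)) * (U x ^ (p + 1) - μ ^ (p + 1)))) :
    (∫ x in Set.Ioo (-1 : ℝ) 1, U x ^ q) =
      Real.sqrt (2 / (p + 1)) * μ ^ ((2 * q - p + 1) / 2) *
        ∫ s in Set.Ioo (0 : ℝ) 1,
          s ^ ((p - 2 * q - 1) / (2 * (p + 1)) - 1) * (1 - s) ^ ((1 : ℝ) / 2 - 1) := by
  have hp1 : 0 < p + 1 := by linarith
  have hIco : Ico (0 : ℝ) 1 ⊆ Ioo (-1) 1 := fun x hx => ⟨by linarith [hx.1], hx.2⟩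
  have hU'0 : U' 0 = 0 := by simpa [hU0] using hU' 0 (left_mem_Ico.2 one_pos)
  have hU'pos : ∀ x ∈ Ioo (0 : ℝ) 1, 0 < U' x := fun x hx =>
    hU'0 ▸ lt_of_hasDerivAt_pos_Ico (fun y hy => hU2 y (hIco hy))
      (fun y hy => heq y (hIco (Ioo_subset_Ico_self hy)) ▸
        rpow_pos_of_pos (hpos y (hIco (Ioo_subset_Ico_self hy))) p) hx
  have hgt : ∀ x ∈ Ioo (0 : ℝ) 1, μ < U x := fun x hx =>
    hU0 ▸ lt_of_hasDerivAt_pos_Ico (fun y hy => hU1 y (hIco hy)) hU'pos hx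
  have henergy : ∀ x ∈ Ioo (0 : ℝ) 1,
      U' x ^ 2 = 2 / (p + 1) * (U x ^ (p + 1) - μ ^ (p + 1)) := fun x hx => by
    rw [hU' x (Ioo_subset_Ico_self hx), sq_sqrt (mul_nonneg (by positivity)
      (sub_nonneg.2 (rpow_le_rpow hμ.le (hgt x hx).le hp1.le)))]
  have hconst : √(2 / (p + 1)) * μ ^ ((2 * q - p + 1) / 2) *
      (√(2 * (p + 1)) * μ ^ ((p - 2 * q - 1) / 2)) = 2 := by
    rw [mul_mul_mul_comm, ← sqrt_mul (by positivity), ← rpow_add hμ,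
      show 2 / (p + 1) * (2 * (p + 1)) = 2 ^ 2 by field_simp,
      show (2 * q - p + 1) / 2 + (p - 2 * q - 1) / 2 = 0 by ring, sqrt_sq zero_le_two, rpow_zero,
      mul_one]
  rw [setIntegral_Ioo_neg_eq_two_mul_of_even (fun x => by rw [heven]) 1,
    integral_beta_eq_mul_integral_rpow hp1 hμ (fun x hx => hU1 x (hIco hx)) hU0 hgt hU'pos
      (hblow2.mono_left (nhdsWithin_mono _ (Ioo_subset_Ioo_left (by norm_num)))) henergy,
    ← mul_assoc, hconst]

theorem Lq_norm_formula (p q : ℝ) (hp : 1 < p) (hq0 : 0 < q) (hq : q < (p - 1) / 2)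
    (U U' U'' : ℝ → ℝ) (μ : ℝ) (hμ : 0 < μ)
    (hU1 : ∀ x ∈ Set.Ioo (-1 : ℝ) 1, HasDerivAt U (U' x) x)
    (hU2 : ∀ x ∈ Set.Ioo (-1 : ℝ) 1, HasDerivAt U' (U'' x) x)
    (heven : ∀ x, U (-x) = U x)
    (hpos : ∀ x ∈ Set.Ioo (-1 : ℝ) 1, 0 < U x)
    (heq : ∀ x ∈ Set.Ioo (-1 : ℝ) 1, U'' x = U x ^ p)
    (hblow1 : Tendsto U (𝓝[Set.Ioo (-1 : ℝ) 1] (-1)) atTop)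
    (hblow2 : Tendsto U (𝓝[Set.Ioo (-1 : ℝ) 1] 1) atTop)
    (hmin : ∀ x ∈ Set.Ioo (-1 : ℝ) 1, μ ≤ U x) (hU0 : U 0 = μ)
    (hU' : ∀ x ∈ Set.Ico (0 : ℝ) 1,
      U' x = Real.sqrt ((2 / (p + 1)) * (U x ^ (p + 1) - μ ^ (p + 1)))) :
    (∫ x in Set.Ioo (-1 : ℝ) 1, U x ^ q) =
      Real.sqrt (2 / (p + 1)) * μ ^ ((2 * q - p + 1) / 2) *
        ∫ s in Set.Ioo (0 : ℝ) 1,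
          s ^ ((p - 2 * q - 1) / (2 * (p + 1)) - 1) * (1 - s) ^ ((1 : ℝ) / 2 - 1) :=
  Lq_norm_formula_general p q hp U U' U'' μ hμ hU1 hU2 heven hpos heq hblow2 hU0 hU'
end

section
/- Let p > 1, q > 0, M : [0,∞) → (0,∞) continuous, λ > 0, and let U_p be the unique positive C² ∩ L^q solution of U'' = U^p on (-1,1) blowing up at ±1. If u ∈ C²((-1,1)) ∩ L^q((-1,1)) is a positive solution of M(‖u‖_{L^q}) u'' = λ u^p blowing up at ±1, then u(x) = t · U_p(x)/‖U_p‖_{L^q} where t = ‖u‖_{L^q} satisfies M(t)/t^{p-1} = λ ‖U_p‖_{L^q}^{1-p}. -/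
/-!
The equation `M(t) u'' = λ u^p` with `t = ‖u‖_q` is, for that fixed `t`, the model equation
`v'' = v^p` up to a constant factor. Since `p ≠ 1`, the factor can be absorbed by scaling:
`v = γ u` with `γ^(p-1) = λ / M(t)` solves the model problem with the same boundary blow-up,
so `γ u = U_p` by uniqueness. Homogeneity of the `L^q` norm then gives `‖U_p‖_q = γ t`, which is
both the claimed profile of `u` and the relation between `M(t)` and `t`.
-/

open Real Set MeasureTheory Filter Topology

theorem setIntegral_pos_of_pos_on {X : Type*} [MeasurableSpace X] {μ : Measure X} {s : Set X}
    {f : X → ℝ} (hs : MeasurableSet s) (hμs : μ s ≠ 0) (hf : IntegrableOn f s μ)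
    (hpos : ∀ x ∈ s, 0 < f x) : 0 < ∫ x in s, f x ∂μ := by
  have hnonneg : 0 ≤ᵐ[μ.restrict s] f := by
    filter_upwards [ae_restrict_mem hs] with x hx using (hpos x hx).le
  rw [setIntegral_pos_iff_support_of_nonneg_ae hnonneg hf]
  exact (pos_iff_ne_zero.mpr hμs).trans_le
    (measure_mono fun x hx => ⟨(hpos x hx).ne', hx⟩)

theorem rpow_setIntegral_rpow_of_eq_const_mul {X : Type*} [MeasurableSpace X] {μ : Measure X}
    {s : Set X} {f g : X → ℝ} {γ q : ℝ} (hs : MeasurableSet s) (hγ : 0 ≤ γ) (hq : q ≠ 0)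
    (hf : ∀ x ∈ s, 0 ≤ f x) (hg : ∀ x ∈ s, g x = γ * f x) :
    (∫ x in s, g x ^ q ∂μ) ^ (1 / q) = γ * (∫ x in s, f x ^ q ∂μ) ^ (1 / q) := by
  have hgq : ∫ x in s, g x ^ q ∂μ = γ ^ q * ∫ x in s, f x ^ q ∂μ := by
    rw [← integral_const_mul]
    refine setIntegral_congr_fun hs fun x hx => ?_
    rw [hg x hx, mul_rpow hγ (hf x hx)]
  have hfq : 0 ≤ ∫ x in s, f x ^ q ∂μ :=
    setIntegral_nonneg hs fun x hx => rpow_nonneg (hf x hx) q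
  rw [hgq, mul_rpow (rpow_nonneg hγ q) hfq, ← rpow_mul hγ, mul_one_div_cancel hq, rpow_one]

theorem mul_eq_mul_rpow_of_rpow_sub_one_eq_div {p c lam γ y y'' : ℝ} (hc : 0 < c) (hγ : 0 < γ)
    (hγp : γ ^ (p - 1) = lam / c) (hy : 0 ≤ y) (h : c * y'' = lam * y ^ p) :
    γ * y'' = (γ * y) ^ p := by
  have hγpow : γ ^ p = γ * (lam / c) := by
    rw [← hγp, rpow_sub_one hγ.ne']
    field_simp
  rw [mul_rpow hγ.le hy, hγpow]
  field_simp
  linarith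

theorem nonlocal_solution_form_general (p q lam : ℝ) (hp : 1 < p) (hq : 0 < q) (hlam : 0 < lam)
    (M : ℝ → ℝ) (hMpos : ∀ s, 0 ≤ s → 0 < M s)
    (U u u' u'' : ℝ → ℝ)
    (huniq : ∀ V V' V'' : ℝ → ℝ,
      (∀ x ∈ Set.Ioo (-1 : ℝ) 1, HasDerivAt V (V' x) x) →
      (∀ x ∈ Set.Ioo (-1 : ℝ) 1, HasDerivAt V' (V'' x) x) →
      (∀ x ∈ Set.Ioo (-1 : ℝ) 1, 0 < V x) →
      (∀ x ∈ Set.Ioo (-1 : ℝ) 1, V'' x = V x ^ p) →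
      Tendsto V (𝓝[Set.Ioo (-1 : ℝ) 1] (-1)) atTop →
      Tendsto V (𝓝[Set.Ioo (-1 : ℝ) 1] 1) atTop →
      ∀ x ∈ Set.Ioo (-1 : ℝ) 1, V x = U x)
    (hu1 : ∀ x ∈ Set.Ioo (-1 : ℝ) 1, HasDerivAt u (u' x) x)
    (hu2 : ∀ x ∈ Set.Ioo (-1 : ℝ) 1, HasDerivAt u' (u'' x) x)
    (hupos : ∀ x ∈ Set.Ioo (-1 : ℝ) 1, 0 < u x)
    (huLq : IntegrableOn (fun x => u x ^ q) (Set.Ioo (-1 : ℝ) 1))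
    (hueq : ∀ x ∈ Set.Ioo (-1 : ℝ) 1,
      M ((∫ y in Set.Ioo (-1 : ℝ) 1, u y ^ q) ^ (1 / q)) * u'' x = lam * u x ^ p)
    (hublow1 : Tendsto u (𝓝[Set.Ioo (-1 : ℝ) 1] (-1)) atTop)
    (hublow2 : Tendsto u (𝓝[Set.Ioo (-1 : ℝ) 1] 1) atTop) :
    (∀ x ∈ Set.Ioo (-1 : ℝ) 1,
      u x = ((∫ y in Set.Ioo (-1 : ℝ) 1, u y ^ q) ^ (1 / q)) * U x /
        ((∫ y in Set.Ioo (-1 : ℝ) 1, U y ^ q) ^ (1 / q))) ∧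
    M ((∫ y in Set.Ioo (-1 : ℝ) 1, u y ^ q) ^ (1 / q)) /
        ((∫ y in Set.Ioo (-1 : ℝ) 1, u y ^ q) ^ (1 / q)) ^ (p - 1) =
      lam * ((∫ y in Set.Ioo (-1 : ℝ) 1, U y ^ q) ^ (1 / q)) ^ (1 - p) := by
  set t := (∫ y in Ioo (-1 : ℝ) 1, u y ^ q) ^ (1 / q)
  have ht : 0 < t := rpow_pos_of_pos (setIntegral_pos_of_pos_on measurableSet_Ioo
    (by simp) huLq fun x hx => rpow_pos_of_pos (hupos x hx) q) _
  have hMt : 0 < M t := hMpos t ht.le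
  set γ := (lam / M t) ^ (p - 1)⁻¹
  have hγ : 0 < γ := rpow_pos_of_pos (div_pos hlam hMt) _
  have hγp : γ ^ (p - 1) = lam / M t := rpow_inv_rpow (div_pos hlam hMt).le (by linarith)
  have hγu : ∀ x ∈ Ioo (-1 : ℝ) 1, γ * u x = U x :=
    huniq (fun x => γ * u x) (fun x => γ * u' x) (fun x => γ * u'' x)
      (fun x hx => (hu1 x hx).const_mul γ) (fun x hx => (hu2 x hx).const_mul γ)
      (fun x hx => mul_pos hγ (hupos x hx))
      (fun x hx => mul_eq_mul_rpow_of_rpow_sub_one_eq_div hMt hγ hγp (hupos x hx).le (hueq x hx))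
      (hublow1.const_mul_atTop hγ) (hublow2.const_mul_atTop hγ)
  have hUnorm : (∫ y in Ioo (-1 : ℝ) 1, U y ^ q) ^ (1 / q) = γ * t :=
    rpow_setIntegral_rpow_of_eq_const_mul measurableSet_Ioo hγ.le hq.ne'
      (fun x hx => (hupos x hx).le) fun x hx => (hγu x hx).symm
  refine ⟨fun x hx => ?_, ?_⟩
  · rw [hUnorm, ← hγu x hx]
    field_simp
  · rw [hUnorm, mul_rpow hγ.le ht.le, show 1 - p = -(p - 1) by ring, rpow_neg hγ.le,
      rpow_neg ht.le, hγp]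
    field_simp

theorem nonlocal_solution_form (p q lam : ℝ) (hp : 1 < p) (hq : 0 < q) (hlam : 0 < lam)
    (M : ℝ → ℝ) (hM : Continuous M) (hMpos : ∀ s, 0 ≤ s → 0 < M s)
    (U U' U'' u u' u'' : ℝ → ℝ)
    (hU1 : ∀ x ∈ Set.Ioo (-1 : ℝ) 1, HasDerivAt U (U' x) x)
    (hU2 : ∀ x ∈ Set.Ioo (-1 : ℝ) 1, HasDerivAt U' (U'' x) x)
    (hUpos : ∀ x ∈ Set.Ioo (-1 : ℝ) 1, 0 < U x)
    (hUeq : ∀ x ∈ Set.Ioo (-1 : ℝ) 1, U'' x = U x ^ p)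
    (hUblow1 : Tendsto U (𝓝[Set.Ioo (-1 : ℝ) 1] (-1)) atTop)
    (hUblow2 : Tendsto U (𝓝[Set.Ioo (-1 : ℝ) 1] 1) atTop)
    (hULq : IntegrableOn (fun x => U x ^ q) (Set.Ioo (-1 : ℝ) 1))
    (huniq : ∀ V V' V'' : ℝ → ℝ,
      (∀ x ∈ Set.Ioo (-1 : ℝ) 1, HasDerivAt V (V' x) x) →
      (∀ x ∈ Set.Ioo (-1 : ℝ) 1, HasDerivAt V' (V'' x) x) →
      (∀ x ∈ Set.Ioo (-1 : ℝ) 1, 0 < V x) →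
      (∀ x ∈ Set.Ioo (-1 : ℝ) 1, V'' x = V x ^ p) →
      Tendsto V (𝓝[Set.Ioo (-1 : ℝ) 1] (-1)) atTop →
      Tendsto V (𝓝[Set.Ioo (-1 : ℝ) 1] 1) atTop →
      ∀ x ∈ Set.Ioo (-1 : ℝ) 1, V x = U x)
    (hu1 : ∀ x ∈ Set.Ioo (-1 : ℝ) 1, HasDerivAt u (u' x) x)
    (hu2 : ∀ x ∈ Set.Ioo (-1 : ℝ) 1, HasDerivAt u' (u'' x) x)
    (hupos : ∀ x ∈ Set.Ioo (-1 : ℝ) 1, 0 < u x)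
    (huLq : IntegrableOn (fun x => u x ^ q) (Set.Ioo (-1 : ℝ) 1))
    (hueq : ∀ x ∈ Set.Ioo (-1 : ℝ) 1,
      M ((∫ y in Set.Ioo (-1 : ℝ) 1, u y ^ q) ^ (1 / q)) * u'' x = lam * u x ^ p)
    (hublow1 : Tendsto u (𝓝[Set.Ioo (-1 : ℝ) 1] (-1)) atTop)
    (hublow2 : Tendsto u (𝓝[Set.Ioo (-1 : ℝ) 1] 1) atTop) :
    (∀ x ∈ Set.Ioo (-1 : ℝ) 1,
      u x = ((∫ y in Set.Ioo (-1 : ℝ) 1, u y ^ q) ^ (1 / q)) * U x /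
        ((∫ y in Set.Ioo (-1 : ℝ) 1, U y ^ q) ^ (1 / q))) ∧
    M ((∫ y in Set.Ioo (-1 : ℝ) 1, u y ^ q) ^ (1 / q)) /
        ((∫ y in Set.Ioo (-1 : ℝ) 1, u y ^ q) ^ (1 / q)) ^ (p - 1) =
      lam * ((∫ y in Set.Ioo (-1 : ℝ) 1, U y ^ q) ^ (1 / q)) ^ (1 - p) :=
  nonlocal_solution_form_general p q lam hp hq hlam M hMpos U u u' u'' huniq hu1 hu2 hupos huLq hueq
    hublow1 hublow2
end
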